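/- For every z ∈ ℂ^n with f_{i_1,…,i_{k+1}}(z) ≠ 0 for all (k+1)-tuples of distinct indices, and all pairwise distinct i_1,…,i_{k+1} ∈ {1,…,n}: K_{i_1}(z) v_{i_2,…,i_{k+1}} = (d_{i_2,…,i_{k+1}}/f_{i_1,i_2,…,i_{k+1}}(z)) · Σ_{ℓ=1}^{k+1} (−1)^{ℓ+1} a_{i_ℓ} v_{i_1,…,\widehat{i_ℓ},…,i_{k+1}}; moreover for pairwise distinct i_1,…,i_k: K_{i_1}(z) v_{i_1,i_2,…,i_k} = −Σ_{m ∉ {i_1,…,i_k}} K_{i_1}(z) v_{m,i_2,…,i_k}. -/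

import Mathlib

open Finset

attribute [local instance] Classical.propDecidable

/-- The basis vector `F_{t(0),…,t(k-1)}` of `V` in the coordinate model: `V` is realized
inside the space of functions `(Fin k → Fin n) → ℂ`, and `F t` is the alternating
indicator of the tuple `t`.  This realizes the antisymmetry relations
`F_{i_{σ(1)},…,i_{σ(k)}} = sgn(σ) F_{i_1,…,i_k}` and `F = 0` on tuples with a repeated
index. -/
noncomputable def Fk {n k : ℕ} (t : Fin k → Fin n) : (Fin k → Fin n) → ℂ :=
  fun s => ∑ σ : Equiv.Perm (Fin k), ((Equiv.Perm.sign σ : ℤ) : ℂ) *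
    (if t = s ∘ σ then 1 else 0)

/-- The vector
`v_{i_1,…,i_k} = F_{i_1,…,i_k} − ∑_{m} (a_{i_m}/|a|) ∑_{j} F_{i_1,…,i_{m-1},j,i_{m+1},…,i_k}`
for pairwise distinct `i_1,…,i_k`, and `v = 0` on tuples with a repeated index. -/
noncomputable def vk {n k : ℕ} (a : Fin n → ℂ) (t : Fin k → Fin n) :
    (Fin k → Fin n) → ℂ :=
  if Function.Injective t then
    Fk t - ∑ m : Fin k, (a (t m) / ∑ j, a j) • ∑ j : Fin n, Fk (Function.update t m j)
  else 0

/-- The contravariant form `S^{(a)}`: distinct (increasing) basis vectors are orthogonal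
and `S^{(a)}(F_{i_1,…,i_k}, F_{i_1,…,i_k}) = a_{i_1} ⋯ a_{i_k}`. -/
noncomputable def Sk {n k : ℕ} (a : Fin n → ℂ) (x y : (Fin k → Fin n) → ℂ) : ℂ :=
  ∑ t ∈ Finset.univ.filter (fun t : Fin k → Fin n => StrictMono t),
    (∏ m, a (t m)) * x t * y t

/-- `d_{i_1,…,i_k} = det(b_{i_1},…,b_{i_k})`, the determinant of the `k×k` matrix whose
rows are the vectors `b_{t(0)},…,b_{t(k-1)} ∈ ℂ^k`. -/
noncomputable def dk {n k : ℕ} (b : Fin n → Fin k → ℂ) (t : Fin k → Fin n) : ℂ :=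
  Matrix.det (Matrix.of fun l m : Fin k => b (t l) m)

/-- `f_{i_1,…,i_{k+1}}(z) = ∑_m (−1)^{m−1} z_{i_m} d_{i_1,…,\hat{i_m},…,i_{k+1}}`
(0-based signs), where the `m`-th index is removed via `Fin.succAbove`. -/
noncomputable def fk {n k : ℕ} (b : Fin n → Fin k → ℂ) (z : Fin n → ℂ)
    (s : Fin (k + 1) → Fin n) : ℂ :=
  ∑ m : Fin (k + 1), (-1) ^ (m : ℕ) * z (s m) * dk b (s ∘ m.succAbove)

/-- The operator `L_{i_1,…,i_{k+1}}` with
`L(F_{i_1,…,\hat{i_m},…,i_{k+1}}) = (−1)^m ∑_ℓ (−1)^ℓ a_{i_ℓ} F_{i_1,…,\hat{i_ℓ},…,i_{k+1}}`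
and `L(F_{j_1,…,j_k}) = 0` for `{j_1,…,j_k} ⊄ {i_1,…,i_{k+1}}`, written on coordinates. -/
noncomputable def Lk {n k : ℕ} (a : Fin n → ℂ) (s : Fin (k + 1) → Fin n) :
    ((Fin k → Fin n) → ℂ) →ₗ[ℂ] ((Fin k → Fin n) → ℂ) where
  toFun x := (∑ m : Fin (k + 1), (-1) ^ (m : ℕ) * x (s ∘ m.succAbove)) •
    (∑ l : Fin (k + 1), ((-1) ^ (l : ℕ) * a (s l)) • Fk (s ∘ l.succAbove))
  map_add' x y := by
    simp only [Pi.add_apply, mul_add, Finset.sum_add_distrib, add_smul]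
  map_smul' c x := by
    simp only [Pi.smul_apply, smul_eq_mul, RingHom.id_apply]
    rw [smul_smul]
    congr 1
    rw [Finset.mul_sum]
    exact Finset.sum_congr rfl fun m _ => by ring

/-- The operator `K_i(z) = ∑ (d_{i_1,…,i_k}/f_{i,i_1,…,i_k}(z)) L_{i,i_1,…,i_k}`, the sum
over unordered `k`-element subsets `{i_1,…,i_k} ⊆ {1,…,n} ∖ {i}` (realized by strictly
increasing tuples avoiding `i`). -/
noncomputable def Kk {n k : ℕ} (a : Fin n → ℂ) (b : Fin n → Fin k → ℂ) (z : Fin n → ℂ)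
    (i : Fin n) : ((Fin k → Fin n) → ℂ) →ₗ[ℂ] ((Fin k → Fin n) → ℂ) :=
  ∑ t ∈ Finset.univ.filter (fun t : Fin k → Fin n => StrictMono t ∧ ∀ l, t l ≠ i),
    (dk b t / fk b z (Fin.cons i t)) • Lk a (Fin.cons i t)

/-!
Every `L_s` has rank one: `L_s x = φ_s(x) • w_s`, where `φ_s(x) = ∑_m (−1)^m x_{s ∖ s_m}`
(`faceSum`) and `w_s = ∑_ℓ (−1)^ℓ a_{s_ℓ} F_{s ∖ s_ℓ}` (`interiorVec`). Everything is then a determinant of a 0/1 incidence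
matrix, possibly bordered:

* `φ_s(F_u)` is the incidence matrix of `u` against `s` with a row of ones on top. Summing one
  slot of `u` over all indices creates a second row of ones, so `φ_s(v_u) = φ_s(F_u)` and
  `∑_j φ_s(v_{u[m ↦ j]}) = 0`; the second claim follows because `v` vanishes on tuples with a
  repeated index.
* `φ_{(i,t)}(F_u) = 0` unless `t` is a rearrangement of `u`, so only one term of `K_i(z) v_u`
  survives; each of its factors is alternating in `t`, so it equals the term at `t = u`, which is
  `(d_u / f_{(i,u)}) • w_{(i,u)}`.
* `w_s = ∑_ℓ (−1)^ℓ a_{s_ℓ} v_{s ∖ s_ℓ}`: the correction terms of `v` add up to the Laplace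
  expansion of a bordered matrix with two equal columns.
-/

open Matrix Equiv

lemma Matrix.det_updateRow_finset_sum {R ι α : Type*} [CommRing R] [DecidableEq ι] [Fintype ι]
    (M : Matrix ι ι R) (i : ι) (s : Finset α) (f : α → ι → R) :
    (M.updateRow i (∑ j ∈ s, f j)).det = ∑ j ∈ s, (M.updateRow i (f j)).det :=
  detRowAlternating.map_update_sum s i f M

lemma Matrix.det_of_cons_comp_succAbove {R : Type*} [CommRing R] {m : ℕ}
    (M : Matrix (Fin (m + 1)) (Fin (m + 1)) R) (i : Fin (m + 1)) (v : Fin (m + 1) → R) :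
    (Matrix.of (Fin.cons v (M ∘ i.succAbove))).det = (-1) ^ (i : ℕ) * (M.updateRow i v).det := by
  have hrows : Matrix.of (Fin.cons v (M ∘ i.succAbove))
      = (M.updateRow i v).submatrix i.cycleRange.symm id := by
    have hcons := Fin.cons_removeNth_eq_comp_cycleRange_symm (M.updateRow i v) i
    have hremove : i.removeNth (M.updateRow i v) = M ∘ i.succAbove :=
      funext fun p => updateRow_ne (Fin.succAbove_ne i p)
    rw [updateRow_self, hremove] at hcons
    rw [hcons]
    rfl
  rw [hrows, det_permute, Perm.sign_symm, Fin.sign_cycleRange]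
  simp

lemma Fin.cons_comp_decomposeFin_symm {α : Type*} {k : ℕ} (i : α) (t : Fin k → α)
    (ρ : Perm (Fin k)) :
    (Fin.cons i t : Fin (k + 1) → α) ∘ Perm.decomposeFin.symm (0, ρ) = Fin.cons i (t ∘ ρ) := by
  ext l
  induction l using Fin.cases <;> simp

lemma Tuple.strictMono_comp_sort {α : Type*} [LinearOrder α] {k : ℕ} {u : Fin k → α}
    (hu : Function.Injective u) : StrictMono (u ∘ Tuple.sort u) :=
  (Tuple.monotone_sort u).strictMono_of_injective (hu.comp (Tuple.sort u).injective)

lemma Tuple.eq_comp_sort_of_range_subset {α : Type*} [LinearOrder α] {k : ℕ} {u t : Fin k → α}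
    (hu : Function.Injective u) (ht : StrictMono t) (hsub : Set.range u ⊆ Set.range t) :
    t = u ∘ Tuple.sort u := by
  have hrange : Set.range u = Set.range t :=
    Set.eq_of_subset_of_ncard_le hsub (by
      rw [Set.ncard_range_of_injective hu, Set.ncard_range_of_injective ht.injective])
  rw [← ht.range_inj (Tuple.strictMono_comp_sort hu), EquivLike.range_comp, hrange]

noncomputable def matchMatrix {ι κ α : Type*} [DecidableEq α] (t : ι → α) (r : κ → α) :
    Matrix ι κ ℂ :=
  Matrix.of fun l p => if t l = r p then 1 else 0

@[simp] lemma matchMatrix_apply {ι κ α : Type*} [DecidableEq α] (t : ι → α) (r : κ → α)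
    (l : ι) (p : κ) : matchMatrix t r l p = if t l = r p then 1 else 0 := rfl

noncomputable def borderMatrix {m : ℕ} (x : ℂ) (row col : Fin m → ℂ)
    (M : Matrix (Fin m) (Fin m) ℂ) : Matrix (Fin (m + 1)) (Fin (m + 1)) ℂ :=
  Matrix.of (Fin.cons (Fin.cons x row) fun l => Fin.cons (col l) (M l))

section borderMatrix

variable {m : ℕ} (x : ℂ) (row col : Fin m → ℂ) (M : Matrix (Fin m) (Fin m) ℂ)

@[simp] lemma borderMatrix_zero_zero : borderMatrix x row col M 0 0 = x := rfl

@[simp] lemma borderMatrix_zero_succ (q : Fin m) : borderMatrix x row col M 0 q.succ = row q := rfl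

@[simp] lemma borderMatrix_succ_zero (l : Fin m) : borderMatrix x row col M l.succ 0 = col l := rfl

@[simp] lemma borderMatrix_succ_succ (l q : Fin m) :
    borderMatrix x row col M l.succ q.succ = M l q := rfl

end borderMatrix

lemma det_borderMatrix_zero {m : ℕ} (row col : Fin (m + 1) → ℂ)
    (M : Matrix (Fin (m + 1)) (Fin (m + 1)) ℂ) :
    (borderMatrix 0 row col M).det = -∑ l : Fin (m + 1),
      (-1) ^ (l : ℕ) * col l * (Matrix.of (Fin.cons row (M ∘ l.succAbove))).det := by
  rw [det_succ_column_zero, Fin.sum_univ_succ, ← Finset.sum_neg_distrib]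
  simp only [borderMatrix_zero_zero, mul_zero, zero_mul, zero_add, Fin.val_succ, pow_succ]
  refine Finset.sum_congr rfl fun l _ => ?_
  have hminor : (borderMatrix 0 row col M).submatrix l.succ.succAbove Fin.succ
      = Matrix.of (Fin.cons row (M ∘ l.succAbove)) := by
    ext p q
    induction p using Fin.cases <;> simp [Fin.succ_succAbove_succ]
    rfl
  rw [borderMatrix_succ_zero, hminor]
  ring

lemma det_borderMatrix_zero_one {k : ℕ} (c : Fin k → ℂ) (D : Matrix (Fin k) (Fin k) ℂ) :
    (borderMatrix 0 1 c D).det = -∑ m, c m * (D.updateRow m 1).det := by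
  cases k with
  | zero => simp [det_unique]
  | succ k =>
    rw [det_borderMatrix_zero]
    simp only [Matrix.det_of_cons_comp_succAbove]
    congr 1
    refine Finset.sum_congr rfl fun m _ => ?_
    rw [← mul_assoc, mul_right_comm _ (c m), ← pow_add, ← two_mul, pow_mul]
    simp

section

variable {n k : ℕ}

lemma Fk_apply_eq_det (t r : Fin k → Fin n) : Fk t r = (matchMatrix t r).det := by
  rw [← det_transpose, det_apply]
  refine Finset.sum_congr rfl fun σ _ => ?_
  rw [Units.smul_def, zsmul_eq_mul]
  simp only [transpose_apply, matchMatrix_apply]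
  rw [Fintype.prod_boole]
  simp [funext_iff]

lemma Fk_eq_zero_of_not_injective {t : Fin k → Fin n} (ht : ¬Function.Injective t) :
    Fk t = 0 := by
  obtain ⟨l₁, l₂, hval, hne⟩ := Function.not_injective_iff.mp ht
  funext r
  rw [Fk_apply_eq_det]
  exact det_zero_of_row_eq hne (by ext p; simp [hval])

lemma sum_Fk_update_apply (w r : Fin k → Fin n) (m : Fin k) :
    ∑ j : Fin n, Fk (Function.update w m j) r = ((matchMatrix w r).updateRow m 1).det := by
  have hupdate : ∀ j, matchMatrix (Function.update w m j) r
      = (matchMatrix w r).updateRow m (fun p => if j = r p then 1 else 0) := by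
    intro j
    ext l p
    rcases eq_or_ne l m with rfl | hl <;> simp [*]
  simp only [Fk_apply_eq_det, hupdate]
  rw [← det_updateRow_finset_sum]
  congr
  ext p
  simp

lemma vk_of_not_injective (a : Fin n → ℂ) {t : Fin k → Fin n} (ht : ¬Function.Injective t) :
    vk a t = 0 :=
  if_neg ht

lemma vk_apply (a : Fin n → ℂ) (w r : Fin k → Fin n) :
    vk a w r = Fk w r + (∑ j, a j)⁻¹ * (borderMatrix 0 1 (a ∘ w) (matchMatrix w r)).det := by
  by_cases hw : Function.Injective w
  · simp only [vk, hw, if_true, Pi.sub_apply, Finset.sum_apply, Pi.smul_apply, smul_eq_mul,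
      sum_Fk_update_apply, det_borderMatrix_zero_one, Function.comp_apply]
    rw [mul_neg, Finset.mul_sum, sub_eq_add_neg]
    simp only [div_eq_inv_mul, mul_assoc]
  · obtain ⟨l₁, l₂, hval, hne⟩ := Function.not_injective_iff.mp hw
    have hborder : (borderMatrix 0 1 (a ∘ w) (matchMatrix w r)).det = 0 := by
      refine det_zero_of_row_eq (Fin.succ_injective _ |>.ne hne) ?_
      ext p
      induction p using Fin.cases <;> simp [hval]
    rw [vk_of_not_injective a hw, Fk_eq_zero_of_not_injective hw, hborder]
    simp

noncomputable def faceMatrix (u : Fin k → Fin n) (s : Fin (k + 1) → Fin n) :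
    Matrix (Fin (k + 1)) (Fin (k + 1)) ℂ :=
  Matrix.of (Fin.cons (fun _ => 1) (matchMatrix u s))

@[simp] lemma faceMatrix_apply_zero (u : Fin k → Fin n) (s : Fin (k + 1) → Fin n)
    (p : Fin (k + 1)) : faceMatrix u s 0 p = 1 := rfl

@[simp] lemma faceMatrix_apply_succ (u : Fin k → Fin n) (s : Fin (k + 1) → Fin n)
    (l : Fin k) (p : Fin (k + 1)) : faceMatrix u s l.succ p = if u l = s p then 1 else 0 := rfl

lemma faceMatrix_update (u : Fin k → Fin n) (s : Fin (k + 1) → Fin n) (m : Fin k) (j : Fin n) :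
    faceMatrix (Function.update u m j) s
      = (faceMatrix u s).updateRow m.succ (fun p => if j = s p then 1 else 0) := by
  ext l p
  induction l using Fin.cases with
  | zero => simp [updateRow_ne (Fin.succ_ne_zero m).symm]
  | succ l =>
    rcases eq_or_ne l m with rfl | hl <;> simp [*]

lemma sum_det_faceMatrix_update (u : Fin k → Fin n) (s : Fin (k + 1) → Fin n) (m : Fin k) :
    ∑ j : Fin n, (faceMatrix (Function.update u m j) s).det = 0 := by
  simp only [faceMatrix_update]
  rw [← det_updateRow_finset_sum]
  refine det_zero_of_row_eq (Fin.succ_ne_zero m).symm ?_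
  ext p
  simp [updateRow_ne (Fin.succ_ne_zero m).symm]

lemma det_faceMatrix_comp_perm (u : Fin k → Fin n) (s : Fin (k + 1) → Fin n)
    (σ : Perm (Fin (k + 1))) :
    (faceMatrix u (s ∘ σ)).det = Perm.sign σ * (faceMatrix u s).det := by
  rw [← det_permute']
  congr
  ext l p
  induction l using Fin.cases <;> rfl

lemma det_faceMatrix_cons_self {i : Fin n} {u : Fin k → Fin n}
    (h : Function.Injective (Fin.cons i u : Fin (k + 1) → Fin n)) :
    (faceMatrix u (Fin.cons i u)).det = 1 := by
  rw [det_of_isUpperTriangular]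
  · refine Finset.prod_eq_one fun l _ => ?_
    induction l using Fin.cases <;> simp
  · intro l p hpl
    induction l using Fin.cases with
    | zero => exact absurd hpl (Fin.not_lt_zero p)
    | succ l =>
      rw [faceMatrix_apply_succ, if_neg]
      exact fun heq => hpl.ne' (h heq)

lemma det_faceMatrix_eq_zero_of_notMem_range {u : Fin k → Fin n} {s : Fin (k + 1) → Fin n}
    {l : Fin k} (hl : u l ∉ Set.range s) : (faceMatrix u s).det = 0 :=
  det_eq_zero_of_row_eq_zero l.succ fun p => by
    rw [faceMatrix_apply_succ, if_neg fun h => hl ⟨p, h.symm⟩]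

noncomputable def faceSum (s : Fin (k + 1) → Fin n) : ((Fin k → Fin n) → ℂ) →ₗ[ℂ] ℂ :=
  ∑ m : Fin (k + 1), ((-1 : ℂ) ^ (m : ℕ)) • LinearMap.proj (s ∘ m.succAbove)

lemma faceSum_apply (s : Fin (k + 1) → Fin n) (x : (Fin k → Fin n) → ℂ) :
    faceSum s x = ∑ m : Fin (k + 1), (-1) ^ (m : ℕ) * x (s ∘ m.succAbove) := by
  simp [faceSum]

lemma faceSum_Fk (u : Fin k → Fin n) (s : Fin (k + 1) → Fin n) :
    faceSum s (Fk u) = (faceMatrix u s).det := by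
  rw [faceSum_apply, det_succ_row_zero]
  refine Finset.sum_congr rfl fun m _ => ?_
  rw [Fk_apply_eq_det]
  simp [submatrix]
  rfl

lemma faceSum_vk (a : Fin n → ℂ) (u : Fin k → Fin n) (s : Fin (k + 1) → Fin n) :
    faceSum s (vk a u) = (faceMatrix u s).det := by
  by_cases hu : Function.Injective u
  · simp [vk, hu, map_sum, faceSum_Fk, sum_det_faceMatrix_update]
  · rw [vk_of_not_injective a hu, ← faceSum_Fk, Fk_eq_zero_of_not_injective hu]

noncomputable def interiorVec (a : Fin n → ℂ) (s : Fin (k + 1) → Fin n) :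
    (Fin k → Fin n) → ℂ :=
  ∑ l : Fin (k + 1), ((-1) ^ (l : ℕ) * a (s l)) • Fk (s ∘ l.succAbove)

lemma Lk_apply (a : Fin n → ℂ) (s : Fin (k + 1) → Fin n) (x : (Fin k → Fin n) → ℂ) :
    Lk a s x = faceSum s x • interiorVec a s := by
  rw [faceSum_apply]
  rfl

noncomputable def interiorMatrix (a : Fin n → ℂ) (s : Fin (k + 1) → Fin n) (r : Fin k → Fin n) :
    Matrix (Fin (k + 1)) (Fin (k + 1)) ℂ :=
  Matrix.of fun l => Fin.cons (a (s l)) (matchMatrix s r l)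

lemma interiorVec_apply (a : Fin n → ℂ) (s : Fin (k + 1) → Fin n) (r : Fin k → Fin n) :
    interiorVec a s r = (interiorMatrix a s r).det := by
  rw [det_succ_column_zero, interiorVec, Finset.sum_apply]
  refine Finset.sum_congr rfl fun l _ => ?_
  rw [Pi.smul_apply, smul_eq_mul, Fk_apply_eq_det]
  rfl

lemma interiorVec_comp_perm (a : Fin n → ℂ) (s : Fin (k + 1) → Fin n) (σ : Perm (Fin (k + 1))) :
    interiorVec a (s ∘ σ) = ((Perm.sign σ : ℤ) : ℂ) • interiorVec a s := by
  funext r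
  rw [Pi.smul_apply, interiorVec_apply, interiorVec_apply, smul_eq_mul]
  exact det_permute σ (interiorMatrix a s r)

/-- Laplace expansion along column `0` of
`borderMatrix 0 (Fin.cons 0 1) (a ∘ s) (interiorMatrix a s r)`, whose columns `0` and `1` agree. -/
lemma sum_det_borderMatrix_comp_succAbove (a : Fin n → ℂ) (s : Fin (k + 1) → Fin n)
    (r : Fin k → Fin n) :
    ∑ l : Fin (k + 1), (-1) ^ (l : ℕ) * a (s l)
      * (borderMatrix 0 1 (a ∘ s ∘ l.succAbove) (matchMatrix (s ∘ l.succAbove) r)).det = 0 := by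
  have hcols : (borderMatrix 0 (Fin.cons 0 1) (a ∘ s) (interiorMatrix a s r)).det = 0 := by
    refine det_zero_of_column_eq (i := 0) (j := 1) zero_ne_one fun l => ?_
    induction l using Fin.cases <;> rfl
  rw [det_borderMatrix_zero, neg_eq_zero] at hcols
  exact hcols

lemma sum_smul_vk_comp_succAbove (a : Fin n → ℂ) (s : Fin (k + 1) → Fin n) :
    ∑ l : Fin (k + 1), ((-1) ^ (l : ℕ) * a (s l)) • vk a (s ∘ l.succAbove) = interiorVec a s := by
  funext r
  simp only [Finset.sum_apply, Pi.smul_apply, smul_eq_mul, vk_apply, mul_add,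
    Finset.sum_add_distrib]
  simp only [mul_left_comm _ (∑ j, a j)⁻¹, ← Finset.mul_sum, sum_det_borderMatrix_comp_succAbove,
    mul_zero, add_zero, interiorVec, Finset.sum_apply, Pi.smul_apply, smul_eq_mul]

lemma dk_comp_perm (b : Fin n → Fin k → ℂ) (t : Fin k → Fin n) (σ : Perm (Fin k)) :
    dk b (t ∘ σ) = Perm.sign σ * dk b t :=
  det_permute σ (Matrix.of fun l m => b (t l) m)

lemma fk_eq_det (b : Fin n → Fin k → ℂ) (z : Fin n → ℂ) (s : Fin (k + 1) → Fin n) :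
    fk b z s = (Matrix.of fun m => (Fin.cons (z (s m)) (b (s m)) : Fin (k + 1) → ℂ)).det := by
  rw [det_succ_column_zero, fk]
  rfl

lemma fk_comp_perm (b : Fin n → Fin k → ℂ) (z : Fin n → ℂ) (s : Fin (k + 1) → Fin n)
    (σ : Perm (Fin (k + 1))) : fk b z (s ∘ σ) = Perm.sign σ * fk b z s := by
  rw [fk_eq_det, fk_eq_det]
  exact det_permute σ (Matrix.of fun m => (Fin.cons (z (s m)) (b (s m)) : Fin (k + 1) → ℂ))

noncomputable def KkTerm (a : Fin n → ℂ) (b : Fin n → Fin k → ℂ) (z : Fin n → ℂ) (i : Fin n)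
    (u t : Fin k → Fin n) : (Fin k → Fin n) → ℂ :=
  (dk b t / fk b z (Fin.cons i t) * (faceMatrix u (Fin.cons i t)).det) •
    interiorVec a (Fin.cons i t)

section KkTerm

variable (a : Fin n → ℂ) (b : Fin n → Fin k → ℂ) (z : Fin n → ℂ) (i : Fin n)

lemma Kk_apply_vk (u : Fin k → Fin n) :
    Kk a b z i (vk a u) = ∑ t ∈ Finset.univ.filter
      (fun t : Fin k → Fin n => StrictMono t ∧ ∀ l, t l ≠ i), KkTerm a b z i u t := by
  simp only [Kk, LinearMap.sum_apply, LinearMap.smul_apply, Lk_apply, faceSum_vk, smul_smul,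
    KkTerm]

lemma KkTerm_comp_perm (u t : Fin k → Fin n) (ρ : Perm (Fin k)) :
    KkTerm a b z i u (t ∘ ρ) = KkTerm a b z i u t := by
  have hsign : Perm.sign (Perm.decomposeFin.symm (0, ρ)) = Perm.sign ρ := by simp
  simp only [KkTerm, ← Fin.cons_comp_decomposeFin_symm, dk_comp_perm, fk_comp_perm,
    det_faceMatrix_comp_perm, interiorVec_comp_perm, hsign, smul_smul]
  rcases Int.units_eq_one_or (Perm.sign ρ) with h | h <;> simp [h, neg_div_neg_eq]

lemma sum_KkTerm_update (u t : Fin k → Fin n) (m : Fin k) :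
    ∑ j : Fin n, KkTerm a b z i (Function.update u m j) t = 0 := by
  simp only [KkTerm, mul_smul, ← Finset.smul_sum, ← Finset.sum_smul, sum_det_faceMatrix_update,
    zero_smul, smul_zero]

lemma Kk_apply_vk_of_injective_cons {u : Fin k → Fin n}
    (h : Function.Injective (Fin.cons i u : Fin (k + 1) → Fin n)) :
    Kk a b z i (vk a u) = (dk b u / fk b z (Fin.cons i u)) • interiorVec a (Fin.cons i u) := by
  obtain ⟨hiu, hu⟩ := Fin.cons_injective_iff.mp h
  have hmem : u ∘ Tuple.sort u ∈ Finset.univ.filter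
      (fun t : Fin k → Fin n => StrictMono t ∧ ∀ l, t l ≠ i) :=
    Finset.mem_filter.mpr
      ⟨Finset.mem_univ _, Tuple.strictMono_comp_sort hu, fun l hl => hiu ⟨_, hl⟩⟩
  rw [Kk_apply_vk, Finset.sum_eq_single_of_mem _ hmem, KkTerm_comp_perm, KkTerm,
    det_faceMatrix_cons_self h, mul_one]
  intro t ht hne
  obtain ⟨htmono, -⟩ := (Finset.mem_filter.mp ht).2
  obtain ⟨l, hl⟩ : ∃ l, u l ∉ Set.range t := by
    by_contra! hall
    exact hne (Tuple.eq_comp_sort_of_range_subset hu htmono (Set.range_subset_iff.mpr hall))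
  have hl' : u l ∉ Set.range (Fin.cons i t : Fin (k + 1) → Fin n) := by
    rw [Fin.range_cons]
    exact fun hmem => hmem.elim (fun h => hiu ⟨l, h⟩) hl
  rw [KkTerm, det_faceMatrix_eq_zero_of_notMem_range hl', mul_zero, zero_smul]

lemma Kk_apply_vk_eq_neg_sum_update {t : Fin k → Fin n} (ht : Function.Injective t) (m : Fin k) :
    Kk a b z i (vk a t)
      = -∑ j ∈ Finset.univ \ Finset.univ.image t, Kk a b z i (vk a (Function.update t m j)) := by
  have htotal : ∑ j : Fin n, Kk a b z i (vk a (Function.update t m j)) = 0 := by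
    simp only [Kk_apply_vk]
    rw [Finset.sum_comm]
    exact Finset.sum_eq_zero fun t' _ => sum_KkTerm_update a b z i t t' m
  have himage : ∑ j ∈ Finset.univ.image t, Kk a b z i (vk a (Function.update t m j))
      = Kk a b z i (vk a t) := by
    rw [Finset.sum_image ht.injOn, Finset.sum_eq_single m, Function.update_eq_self]
    · intro l _ hlm
      have hrepeat : ¬Function.Injective (Function.update t m (t l)) := fun hinj =>
        hlm (hinj (by rw [Function.update_self, Function.update_of_ne hlm]))
      rw [vk_of_not_injective a hrepeat, map_zero]
    · exact fun hm => absurd (Finset.mem_univ m) hm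
  rw [← Finset.sum_sdiff (Finset.subset_univ (Finset.univ.image t)), himage] at htotal
  exact eq_neg_of_add_eq_zero_left ((add_comm _ _).trans htotal)

end KkTerm

end

theorem stmt_19_general (n k : ℕ) (hk : 1 ≤ k) (a : Fin n → ℂ) (b : Fin n → Fin k → ℂ) (z : Fin n → ℂ) :
    (∀ s : Fin (k + 1) → Fin n, Function.Injective s →
      Kk a b z (s 0) (vk a (s ∘ Fin.succAbove 0)) =
        (dk b (s ∘ Fin.succAbove 0) / fk b z s) •
          ∑ l : Fin (k + 1), ((-1) ^ (l : ℕ) * a (s l)) • vk a (s ∘ Fin.succAbove l)) ∧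
    (∀ t : Fin k → Fin n, Function.Injective t →
      Kk a b z (t ⟨0, hk⟩) (vk a t) =
        -∑ m ∈ Finset.univ \ Finset.univ.image t,
          Kk a b z (t ⟨0, hk⟩) (vk a (Function.update t ⟨0, hk⟩ m))) := by
  refine ⟨fun s hs => ?_, fun t ht => Kk_apply_vk_eq_neg_sum_update a b z _ ht _⟩
  have hcons : Fin.cons (s 0) (s ∘ Fin.succAbove 0) = s := by
    rw [Fin.succAbove_zero]
    exact Fin.cons_self_tail s
  have h := Kk_apply_vk_of_injective_cons a b z (s 0) (u := s ∘ Fin.succAbove 0) (hcons ▸ hs)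
  rw [hcons] at h
  rw [h, sum_smul_vk_comp_succAbove]

/-- For `z` with `f ≠ 0` on all injective `(k+1)`-tuples and pairwise
distinct `i_1,…,i_{k+1}` (encoded as an injective tuple `s`, with `i_1 = s 0`):
`K_{i_1}(z) v_{i_2,…,i_{k+1}} = (d_{i_2,…,i_{k+1}}/f_{i_1,…,i_{k+1}}(z)) ∑_ℓ (−1)^{ℓ+1} a_{i_ℓ} v_{i_1,…,\hat{i_ℓ},…,i_{k+1}}`;
moreover, for pairwise distinct `i_1,…,i_k`:
`K_{i_1}(z) v_{i_1,i_2,…,i_k} = −∑_{m ∉ {i_1,…,i_k}} K_{i_1}(z) v_{m,i_2,…,i_k}`. -/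
theorem stmt_19 (n k : ℕ) (hk : 1 ≤ k) (hkn : k < n)
    (a : Fin n → ℂ) (ha : ∀ j, a j ≠ 0) (hA : (∑ j, a j) ≠ 0)
    (b : Fin n → Fin k → ℂ)
    (hb : ∀ t : Fin k → Fin n, Function.Injective t → dk b t ≠ 0)
    (z : Fin n → ℂ)
    (hz : ∀ s : Fin (k + 1) → Fin n, Function.Injective s → fk b z s ≠ 0) :
    (∀ s : Fin (k + 1) → Fin n, Function.Injective s →
      Kk a b z (s 0) (vk a (s ∘ Fin.succAbove 0)) =
        (dk b (s ∘ Fin.succAbove 0) / fk b z s) •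
          ∑ l : Fin (k + 1), ((-1) ^ (l : ℕ) * a (s l)) • vk a (s ∘ Fin.succAbove l)) ∧
    (∀ t : Fin k → Fin n, Function.Injective t →
      Kk a b z (t ⟨0, hk⟩) (vk a t) =
        -∑ m ∈ Finset.univ \ Finset.univ.image t,
          Kk a b z (t ⟨0, hk⟩) (vk a (Function.update t ⟨0, hk⟩ m))) :=
  stmt_19_general n k hk a b z
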